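/- With the Lévy–Khintchine data (μ, c, K) and κ as defined, there exists a constant c₁ > 0 such that for all λ ∈ [0,1], all z ∈ ℂ with Re z ∈ {0, R, 2R}, and all n ∈ {0,1,2}: |∂ⁿ_λκ(λ,z)| ≤ c₁·(1 + |z|^{3+n}), where ∂⁰_λκ := κ. -/

import Mathlib

/-!
Taylor's formula with integral remainder, `e^w - 1 - w = w² ∫₀¹ (1 - t) e^{tw} dt`, gives
`κ(λ, z) = μz + cz²/2 + z² ∫ x² ∫₀¹ (1 - t) e^{tλzx} dt K(dx)` for every `λ`, including `λ = 0`.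
Each `λ`-derivative brings down a factor `tzx`, so for `n ≥ 1`
`∂ⁿ_λ κ(λ, z) = z^{2+n} ∫ x^{2+n} ∫₀¹ tⁿ (1 - t) e^{tλzx} dt K(dx)`.
For `λ ∈ [0, 1]` and `Re z ∈ {0, R, 2R}` the exponent `tλ Re z` stays in a compact interval
`[q₁, q₂] ⊂ J` around `0`, so the integrand is dominated by `|x|^{2+n} (e^{q₁x} + e^{q₂x})`,
which is `K`-integrable: near `0` because `∫ min(1, x²) dK < ∞`, away from `0` because `|x|^k`
is beaten by `e^{d|x|}` and `J` is open. This domination justifies differentiating under the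
integral and bounds the integral uniformly in `λ`.
-/

open MeasureTheory Complex Set

noncomputable def kappa (μ c : ℝ) (K : Measure ℝ) (lam : ℝ) (z : ℂ) : ℂ :=
  if lam = 0 then (μ : ℂ) * z + (((c + ∫ x : ℝ, x ^ 2 ∂K) : ℝ) : ℂ) / 2 * z ^ 2
  else (μ : ℂ) * z + (c : ℂ) / 2 * z ^ 2 +
    ((lam : ℂ) ^ 2)⁻¹ *
      ∫ x : ℝ, (Complex.exp ((lam : ℂ) * z * (x : ℂ)) - 1 - (lam : ℂ) * z * (x : ℂ)) ∂K

noncomputable def kbar (μ c : ℝ) (K : Measure ℝ) (lam : ℝ) (y z : ℂ) : ℂ :=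
  kappa μ c K lam (y + z) - kappa μ c K lam y - kappa μ c K lam z

noncomputable def gamLK (μ c : ℝ) (K : Measure ℝ) (lam : ℝ) (z : ℂ) : ℂ :=
  kbar μ c K lam z 1 / kbar μ c K lam 1 1

noncomputable def etaLK (μ c : ℝ) (K : Measure ℝ) (lam : ℝ) (z : ℂ) : ℂ :=
  kappa μ c K lam z - kappa μ c K lam 1 * gamLK μ c K lam z

noncomputable def expTaylorKernel (n : ℕ) (w : ℂ) : ℂ :=
  ∫ t in (0 : ℝ)..1, (t : ℂ) ^ n * (1 - t) * exp (t * w)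

lemma norm_ofReal_pow_mul_one_sub_le {t : ℝ} (ht : t ∈ Icc (0 : ℝ) 1) (n : ℕ) :
    ‖(t : ℂ) ^ n * (1 - t)‖ ≤ 1 := by
  rw [show (t : ℂ) ^ n * (1 - t) = ((t ^ n * (1 - t) : ℝ) : ℂ) by push_cast; ring,
    norm_real, Real.norm_of_nonneg (mul_nonneg (pow_nonneg ht.1 n) (by linarith [ht.2]))]
  nlinarith [pow_le_one₀ ht.1 ht.2 (n := n), pow_nonneg ht.1 n, ht.1]

lemma exp_sub_one_sub_eq_sq_mul_expTaylorKernel (w : ℂ) :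
    exp w - 1 - w = w ^ 2 * expTaylorKernel 0 w := by
  have hderiv : ∀ t ∈ uIcc (0 : ℝ) 1,
      HasDerivAt (fun t : ℝ => exp (t * w) * (w * (1 - t) + 1))
        (w ^ 2 * ((t : ℂ) ^ 0 * (1 - t) * exp (t * w))) t := by
    intro t _
    have hexp : HasDerivAt (fun t : ℝ => exp (t * w)) (exp (t * w) * w) t :=
      ((hasDerivAt_id (t : ℂ)).mul_const w).cexp.comp_ofReal.congr_deriv (by simp)
    have hlin : HasDerivAt (fun t : ℝ => w * (1 - t) + 1) (-w) t :=
      ((((hasDerivAt_id (t : ℂ)).const_sub 1).const_mul w).add_const 1).comp_ofReal.congr_deriv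
        (by simp)
    exact (hexp.mul hlin).congr_deriv (by ring)
  rw [expTaylorKernel, ← intervalIntegral.integral_const_mul,
    intervalIntegral.integral_eq_sub_of_hasDerivAt hderiv
      (Continuous.intervalIntegrable (by fun_prop) _ _)]
  simp
  ring

lemma expTaylorKernel_zero_zero : expTaylorKernel 0 0 = 1 / 2 := by
  simp only [expTaylorKernel, pow_zero, one_mul, mul_zero, exp_zero, mul_one]
  rw [intervalIntegral.integral_sub intervalIntegrable_const
    (continuous_ofReal.intervalIntegrable _ _), intervalIntegral.integral_ofReal]
  norm_num

lemma hasDerivAt_expTaylorKernel (n : ℕ) (w₀ : ℂ) :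
    HasDerivAt (expTaylorKernel n) (expTaylorKernel (n + 1) w₀) w₀ := by
  have hbound : ∀ t ∈ uIoc (0 : ℝ) 1, ∀ w ∈ Metric.ball (0 : ℂ) (‖w₀‖ + 1),
      ‖(t : ℂ) ^ (n + 1) * (1 - t) * exp (t * w)‖ ≤ Real.exp (‖w₀‖ + 1) := by
    intro t ht w hw
    have ht' : t ∈ Icc (0 : ℝ) 1 := Ioc_subset_Icc_self (by simpa using ht)
    rw [norm_mul, norm_exp]
    refine (mul_le_of_le_one_left (by positivity) (norm_ofReal_pow_mul_one_sub_le ht' _)).trans ?_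
    refine Real.exp_le_exp.2 ((re_le_norm _).trans ?_)
    rw [norm_mul, norm_real, Real.norm_of_nonneg ht'.1]
    have hw : ‖w‖ < ‖w₀‖ + 1 := by simpa using hw
    nlinarith [ht'.2, norm_nonneg w]
  refine (intervalIntegral.hasDerivAt_integral_of_dominated_loc_of_deriv_le
    (F' := fun w t => (t : ℂ) ^ (n + 1) * (1 - t) * exp (t * w))
    (Metric.isOpen_ball.mem_nhds (by simp)) (.of_forall fun w => by fun_prop)
    (Continuous.intervalIntegrable (by fun_prop) _ _) (by fun_prop) (.of_forall hbound)
    intervalIntegrable_const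
    (.of_forall fun t _ w _ => ?_)).2
  have := (((hasDerivAt_id w).const_mul (t : ℂ)).cexp.const_mul ((t : ℂ) ^ n * (1 - t)))
  exact this.congr_deriv (by simp only [id]; ring)

lemma continuous_expTaylorKernel (n : ℕ) : Continuous (expTaylorKernel n) :=
  continuous_iff_continuousAt.2 fun w => (hasDerivAt_expTaylorKernel n w).continuousAt

lemma norm_expTaylorKernel_le {n : ℕ} {w : ℂ} {C : ℝ}
    (h : ∀ t ∈ Icc (0 : ℝ) 1, Real.exp (t * w.re) ≤ C) : ‖expTaylorKernel n w‖ ≤ C := by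
  have := intervalIntegral.norm_integral_le_of_norm_le_const
    (f := fun t : ℝ => (t : ℂ) ^ n * (1 - t) * exp (t * w)) (a := 0) (b := 1) (C := C) ?_
  · simpa [expTaylorKernel] using this
  intro t ht
  have ht' : t ∈ Icc (0 : ℝ) 1 := Ioc_subset_Icc_self (by simpa using ht)
  rw [norm_mul, norm_exp]
  refine (mul_le_of_le_one_left (by positivity) (norm_ofReal_pow_mul_one_sub_le ht' _)).trans ?_
  simpa using h t ht'

noncomputable def kappaIntegrand (z : ℂ) (n : ℕ) (l x : ℝ) : ℂ :=
  (x : ℂ) ^ (2 + n) * expTaylorKernel n (l * (z * x))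

lemma kappa_eq_integral_kappaIntegrand (μ c : ℝ) (K : Measure ℝ) (l : ℝ) (z : ℂ) :
    kappa μ c K l z = μ * z + c / 2 * z ^ 2 + z ^ 2 * ∫ x, kappaIntegrand z 0 l x ∂K := by
  rcases eq_or_ne l 0 with rfl | hl
  · simp only [kappa, if_true, kappaIntegrand, ofReal_zero, zero_mul, expTaylorKernel_zero_zero,
      integral_mul_const, add_zero]
    rw [show (fun x : ℝ => (x : ℂ) ^ 2) = fun x => ((x ^ 2 : ℝ) : ℂ) by simp,
      integral_complex_ofReal]
    push_cast
    ring
  · have hl' : (l : ℂ) ≠ 0 := ofReal_ne_zero.2 hl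
    simp only [kappa, if_neg hl, kappaIntegrand, add_zero, ← integral_const_mul]
    congr 1
    refine integral_congr_ae (.of_forall fun x => ?_)
    dsimp only
    rw [exp_sub_one_sub_eq_sq_mul_expTaylorKernel]
    field_simp

lemma hasDerivAt_kappaIntegrand (z : ℂ) (n : ℕ) (l x : ℝ) :
    HasDerivAt (fun l => kappaIntegrand z n l x) (z * kappaIntegrand z (n + 1) l x) l := by
  have := (((hasDerivAt_expTaylorKernel n _).comp (l : ℂ)
    ((hasDerivAt_id (l : ℂ)).mul_const (z * x))).comp_ofReal).const_mul ((x : ℂ) ^ (2 + n))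
  exact this.congr_deriv (by simp only [kappaIntegrand, id]; ring)

lemma continuous_kappaIntegrand (z : ℂ) (n : ℕ) (l : ℝ) : Continuous (kappaIntegrand z n l) := by
  have := continuous_expTaylorKernel n
  unfold kappaIntegrand
  fun_prop

lemma exp_mul_le_exp_add_exp {s q₁ q₂ : ℝ} (hs : s ∈ Icc q₁ q₂) (x : ℝ) :
    Real.exp (s * x) ≤ Real.exp (q₁ * x) + Real.exp (q₂ * x) := by
  rcases le_total 0 x with hx | hx
  · exact (Real.exp_le_exp.2 (mul_le_mul_of_nonneg_right hs.2 hx)).trans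
      (le_add_of_nonneg_left (Real.exp_pos _).le)
  · exact (Real.exp_le_exp.2 (mul_le_mul_of_nonpos_right hs.1 hx)).trans
      (le_add_of_nonneg_right (Real.exp_pos _).le)

lemma norm_kappaIntegrand_le {z : ℂ} {q₁ q₂ l : ℝ} (hq : (0 : ℝ) ∈ Icc q₁ q₂)
    (hl : l * z.re ∈ Icc q₁ q₂) (n : ℕ) (x : ℝ) :
    ‖kappaIntegrand z n l x‖ ≤ |x| ^ (2 + n) * (Real.exp (q₁ * x) + Real.exp (q₂ * x)) := by
  rw [kappaIntegrand, norm_mul, norm_pow, norm_real, Real.norm_eq_abs]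
  refine mul_le_mul_of_nonneg_left (norm_expTaylorKernel_le fun t ht => ?_) (by positivity)
  have hre : t * ((l : ℂ) * (z * x)).re = (t * (l * z.re)) * x := by
    simp [mul_re]; ring
  rw [hre]
  exact exp_mul_le_exp_add_exp ((convex_Icc q₁ q₂).smul_mem_of_zero_mem hq hl ht) x

lemma abs_pow_mul_exp_le (k : ℕ) {d : ℝ} (hd : 0 < d) (s x : ℝ) :
    |x| ^ k * Real.exp (s * x) ≤
      k.factorial / d ^ k * (Real.exp ((s - d) * x) + Real.exp ((s + d) * x)) := by
  have hpow : |x| ^ k ≤ k.factorial / d ^ k * Real.exp (d * |x|) := by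
    have := Real.pow_div_factorial_le_exp (d * |x|) (by positivity) k
    rw [mul_pow, div_le_iff₀ (by positivity)] at this
    rw [div_mul_eq_mul_div, le_div_iff₀ (by positivity)]
    linarith
  have hexp : Real.exp (d * |x|) * Real.exp (s * x) ≤
      Real.exp ((s - d) * x) + Real.exp ((s + d) * x) := by
    rw [← Real.exp_add]
    rcases abs_cases x with ⟨hx, _⟩ | ⟨hx, _⟩ <;> rw [hx]
    · exact le_add_of_nonneg_left (Real.exp_pos _).le |>.trans_eq' (by ring_nf)
    · exact le_add_of_nonneg_right (Real.exp_pos _).le |>.trans_eq' (by ring_nf)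
  calc |x| ^ k * Real.exp (s * x)
      ≤ k.factorial / d ^ k * Real.exp (d * |x|) * Real.exp (s * x) := by gcongr
    _ ≤ _ := by rw [mul_assoc]; gcongr

lemma integrable_abs_pow_mul_exp {K : Measure ℝ}
    (hK : Integrable (fun x => min 1 (x ^ 2)) K) {s d : ℝ} (hd : 0 < d)
    (hsub : IntegrableOn (fun x => Real.exp ((s - d) * x)) {x | 1 ≤ |x|} K)
    (hadd : IntegrableOn (fun x => Real.exp ((s + d) * x)) {x | 1 ≤ |x|} K)
    {k : ℕ} (hk : 2 ≤ k) :
    Integrable (fun x => |x| ^ k * Real.exp (s * x)) K := by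
  have hS : MeasurableSet {x : ℝ | 1 ≤ |x|} := measurableSet_le measurable_const measurable_abs
  have hmeas : AEStronglyMeasurable (fun x => |x| ^ k * Real.exp (s * x)) K :=
    (by fun_prop : Continuous fun x : ℝ => |x| ^ k * Real.exp (s * x)).aestronglyMeasurable
  have hnorm : ∀ x, ‖|x| ^ k * Real.exp (s * x)‖ = |x| ^ k * Real.exp (s * x) := fun x =>
    Real.norm_of_nonneg (by positivity)
  have hlarge : IntegrableOn (fun x => |x| ^ k * Real.exp (s * x)) {x | 1 ≤ |x|} K :=
    ((hsub.add hadd).const_mul _).mono' hmeas.restrict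
      (.of_forall fun x => (hnorm x).trans_le (abs_pow_mul_exp_le k hd s x))
  have hsmall : IntegrableOn (fun x => |x| ^ k * Real.exp (s * x)) {x | 1 ≤ |x|}ᶜ K := by
    refine (hK.integrableOn.const_mul (Real.exp |s|)).mono' hmeas.restrict ?_
    filter_upwards [ae_restrict_mem hS.compl] with x hx
    have hx : |x| < 1 := not_le.1 hx
    rw [hnorm, min_eq_right (by nlinarith [sq_abs x, abs_nonneg x]), mul_comm, ← sq_abs]
    refine mul_le_mul ?_ (pow_le_pow_of_le_one (abs_nonneg x) hx.le hk) (by positivity)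
      (by positivity)
    exact Real.exp_le_exp.2 <|
      (le_abs_self _).trans ((abs_mul s x).trans_le (by nlinarith [abs_nonneg s]))
  simpa using hlarge.union hsmall

lemma integrable_abs_pow_mul_exp_of_mem_Ioo {K : Measure ℝ}
    (hK : Integrable (fun x => min 1 (x ^ 2)) K) {a b : ℝ}
    (hexp : ∀ s ∈ Ioo a b, IntegrableOn (fun x => Real.exp (s * x)) {x | 1 ≤ |x|} K)
    {s : ℝ} (hs : s ∈ Ioo a b) {k : ℕ} (hk : 2 ≤ k) :
    Integrable (fun x => |x| ^ k * Real.exp (s * x)) K := by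
  obtain ⟨d, hd, hda, hdb⟩ : ∃ d, 0 < d ∧ d < s - a ∧ d < b - s :=
    ⟨min (s - a) (b - s) / 2, half_pos (lt_min (sub_pos.2 hs.1) (sub_pos.2 hs.2)),
      by linarith [min_le_left (s - a) (b - s), hs.1],
      by linarith [min_le_right (s - a) (b - s), hs.2]⟩
  exact integrable_abs_pow_mul_exp hK hd (hexp _ ⟨by linarith, by linarith⟩)
    (hexp _ ⟨by linarith, by linarith⟩) hk

lemma integrable_abs_pow_mul_exp_add_exp {K : Measure ℝ}
    (hK : Integrable (fun x => min 1 (x ^ 2)) K) {a b : ℝ}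
    (hexp : ∀ s ∈ Ioo a b, IntegrableOn (fun x => Real.exp (s * x)) {x | 1 ≤ |x|} K)
    {q₁ q₂ : ℝ} (hq₁ : q₁ ∈ Ioo a b) (hq₂ : q₂ ∈ Ioo a b) {k : ℕ} (hk : 2 ≤ k) :
    Integrable (fun x => |x| ^ k * (Real.exp (q₁ * x) + Real.exp (q₂ * x))) K := by
  refine ((integrable_abs_pow_mul_exp_of_mem_Ioo hK hexp hq₁ hk).add
    (integrable_abs_pow_mul_exp_of_mem_Ioo hK hexp hq₂ hk)).congr (.of_forall fun x => ?_)
  simp only [Pi.add_apply, mul_add]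

lemma exists_uIcc_subset_Ioo {a b u v : ℝ} (hu : u ∈ Ioo a b) (hv : v ∈ Ioo a b) :
    ∃ q₁ q₂, q₁ ∈ Ioo a b ∧ q₂ ∈ Ioo a b ∧ uIcc u v ⊆ Ioo q₁ q₂ := by
  have hm : a < u ⊓ v := lt_inf_iff.2 ⟨hu.1, hv.1⟩
  have hM : u ⊔ v < b := sup_lt_iff.2 ⟨hu.2, hv.2⟩
  have := (inf_le_sup : u ⊓ v ≤ u ⊔ v)
  exact ⟨(a + u ⊓ v) / 2, (u ⊔ v + b) / 2, ⟨by linarith, by linarith⟩,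
    ⟨by linarith, by linarith⟩, Icc_subset_Ioo (by linarith) (by linarith)⟩

lemma mem_uIcc_zero_two_mul {R r : ℝ} (hr : r ∈ ({0, R, 2 * R} : Set ℝ)) :
    r ∈ uIcc 0 (2 * R) := by
  simp only [mem_insert_iff, mem_singleton_iff] at hr
  rw [mem_uIcc]
  rcases le_total 0 R with hR | hR
  · left; rcases hr with h | h | h <;> rw [h] <;> constructor <;> linarith
  · right; rcases hr with h | h | h <;> rw [h] <;> constructor <;> linarith

lemma pow_le_one_add_pow {u : ℝ} (hu : 0 ≤ u) {k j : ℕ} (hkj : k ≤ j) : u ^ k ≤ 1 + u ^ j := by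
  rcases le_total u 1 with h | h
  · linarith [pow_le_one₀ hu h (n := k), pow_nonneg hu j]
  · linarith [pow_le_pow_right₀ h hkj]

noncomputable def expEnvelopeMoment (K : Measure ℝ) (q₁ q₂ : ℝ) (k : ℕ) : ℝ :=
  ∫ x, |x| ^ k * (Real.exp (q₁ * x) + Real.exp (q₂ * x)) ∂K

lemma expEnvelopeMoment_nonneg (K : Measure ℝ) (q₁ q₂ : ℝ) (k : ℕ) :
    0 ≤ expEnvelopeMoment K q₁ q₂ k :=
  integral_nonneg fun x => by positivity

section EnvelopeBounds

variable {K : Measure ℝ} {z : ℂ} {q₁ q₂ : ℝ} (hq : (0 : ℝ) ∈ Icc q₁ q₂)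
  (henv : ∀ k, 2 ≤ k → Integrable (fun x => |x| ^ k * (Real.exp (q₁ * x) + Real.exp (q₂ * x))) K)
include hq henv

lemma integrable_kappaIntegrand {l : ℝ} (hl : l * z.re ∈ Icc q₁ q₂) (n : ℕ) :
    Integrable (kappaIntegrand z n l) K :=
  (henv (2 + n) (by omega)).mono' (continuous_kappaIntegrand z n l).aestronglyMeasurable
    (.of_forall (norm_kappaIntegrand_le hq hl n))

lemma norm_integral_kappaIntegrand_le {l : ℝ} (hl : l * z.re ∈ Icc q₁ q₂) (n : ℕ) :
    ‖∫ x, kappaIntegrand z n l x ∂K‖ ≤ expEnvelopeMoment K q₁ q₂ (2 + n) :=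
  norm_integral_le_of_norm_le (henv (2 + n) (by omega))
    (.of_forall (norm_kappaIntegrand_le hq hl n))

lemma hasDerivAt_integral_kappaIntegrand {l₀ : ℝ} (hl₀ : l₀ * z.re ∈ Ioo q₁ q₂) (n : ℕ) :
    HasDerivAt (fun l => ∫ x, kappaIntegrand z n l x ∂K)
      (z * ∫ x, kappaIntegrand z (n + 1) l₀ x ∂K) l₀ := by
  have hU : {l : ℝ | l * z.re ∈ Ioo q₁ q₂} ∈ nhds l₀ :=
    (isOpen_Ioo.preimage (continuous_id.mul continuous_const)).mem_nhds hl₀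
  have h := hasDerivAt_integral_of_dominated_loc_of_deriv_le (μ := K)
    (F := fun l x => kappaIntegrand z n l x)
    (F' := fun l x => z * kappaIntegrand z (n + 1) l x)
    (bound := fun x => ‖z‖ * (|x| ^ (2 + (n + 1)) * (Real.exp (q₁ * x) + Real.exp (q₂ * x))))
    hU (.of_forall fun l => (continuous_kappaIntegrand z n l).aestronglyMeasurable)
    (integrable_kappaIntegrand hq henv (Ioo_subset_Icc_self hl₀) n)
    ((continuous_kappaIntegrand z (n + 1) l₀).aestronglyMeasurable.const_mul z)
    (.of_forall fun x l hl => by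
      rw [norm_mul]
      exact mul_le_mul_of_nonneg_left
        (norm_kappaIntegrand_le hq (Ioo_subset_Icc_self hl) (n + 1) x) (norm_nonneg z))
    ((henv _ (by omega)).const_mul _)
    (.of_forall fun x l _ => hasDerivAt_kappaIntegrand z n l x)
  simpa only [integral_const_mul] using h.2

lemma norm_kappa_le (μ c : ℝ) {l : ℝ} (hl : l * z.re ∈ Icc q₁ q₂) :
    ‖kappa μ c K l z‖ ≤ (|μ| + |c| + expEnvelopeMoment K q₁ q₂ 2) * (1 + ‖z‖ ^ 3) := by
  have hF := norm_integral_kappaIntegrand_le hq henv hl 0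
  have hz₁ := pow_le_one_add_pow (norm_nonneg z) (show 1 ≤ 3 by norm_num)
  have hz₂ := pow_le_one_add_pow (norm_nonneg z) (show 2 ≤ 3 by norm_num)
  rw [pow_one] at hz₁
  rw [kappa_eq_integral_kappaIntegrand]
  calc _ ≤ ‖(μ : ℂ) * z‖ + ‖(c : ℂ) / 2 * z ^ 2‖ + ‖z ^ 2 * ∫ x, kappaIntegrand z 0 l x ∂K‖ :=
        norm_add₃_le
    _ = |μ| * ‖z‖ + |c| / 2 * ‖z‖ ^ 2 + ‖z‖ ^ 2 * ‖∫ x, kappaIntegrand z 0 l x ∂K‖ := by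
        simp
    _ ≤ _ := by
        have := mul_le_mul_of_nonneg_left hz₁ (abs_nonneg μ)
        have := mul_le_mul_of_nonneg_left hz₂ (abs_nonneg c)
        have := mul_le_mul hz₂ hF (norm_nonneg _) (by positivity)
        nlinarith [abs_nonneg c, pow_nonneg (norm_nonneg z) 2]

variable (hI : ∀ l ∈ Icc (0 : ℝ) 1, l * z.re ∈ Ioo q₁ q₂)
include hI

lemma derivWithin_Icc_of_eqOn_const_add_mul_integral {f : ℝ → ℂ} {A w : ℂ} {m : ℕ}
    (hf : EqOn f (fun l => A + w * ∫ x, kappaIntegrand z m l x ∂K) (Icc 0 1))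
    {l : ℝ} (hl : l ∈ Icc (0 : ℝ) 1) :
    derivWithin f (Icc 0 1) l = w * z * ∫ x, kappaIntegrand z (m + 1) l x ∂K := by
  rw [derivWithin_congr hf (hf hl), mul_assoc]
  exact (((hasDerivAt_integral_kappaIntegrand hq henv (hI l hl) m).const_mul w).const_add A)
    |>.hasDerivWithinAt.derivWithin (uniqueDiffOn_Icc zero_lt_one l hl)

lemma iteratedDerivWithin_succ_kappa (μ c : ℝ) (n : ℕ) {l : ℝ} (hl : l ∈ Icc (0 : ℝ) 1) :
    iteratedDerivWithin (n + 1) (fun l => kappa μ c K l z) (Icc 0 1) l =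
      z ^ (3 + n) * ∫ x, kappaIntegrand z (n + 1) l x ∂K := by
  induction n generalizing l with
  | zero =>
    rw [iteratedDerivWithin_one, derivWithin_Icc_of_eqOn_const_add_mul_integral hq henv hI
      (A := μ * z + c / 2 * z ^ 2) (fun l _ => kappa_eq_integral_kappaIntegrand μ c K l z) hl]
    ring
  | succ n ih =>
    rw [iteratedDerivWithin_succ, derivWithin_Icc_of_eqOn_const_add_mul_integral hq henv hI
      (A := 0) (w := z ^ (3 + n)) (m := n + 1) (fun l hl => by simp only [ih hl, zero_add]) hl]
    ring

lemma norm_iteratedDerivWithin_succ_kappa_le (μ c : ℝ) (n : ℕ) {l : ℝ}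
    (hl : l ∈ Icc (0 : ℝ) 1) :
    ‖iteratedDerivWithin (n + 1) (fun l => kappa μ c K l z) (Icc 0 1) l‖ ≤
      expEnvelopeMoment K q₁ q₂ (3 + n) * (1 + ‖z‖ ^ (4 + n)) := by
  rw [iteratedDerivWithin_succ_kappa hq henv hI μ c n hl, norm_mul, norm_pow, mul_comm]
  refine mul_le_mul ((norm_integral_kappaIntegrand_le hq henv (Ioo_subset_Icc_self (hI l hl))
    (n + 1)).trans_eq (by rw [show 2 + (n + 1) = 3 + n by omega]))
    (pow_le_one_add_pow (norm_nonneg z) (by omega)) (by positivity)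
    (expEnvelopeMoment_nonneg K q₁ q₂ _)

end EnvelopeBounds

theorem kappa_lambda_derivatives_polynomial_bound_general
    (μ c : ℝ) (K : MeasureTheory.Measure ℝ)
    (hKmin : ∫⁻ x : ℝ, ENNReal.ofReal (min 1 (x ^ 2)) ∂K ≠ ⊤)
    (R : ℝ) (a b : ℝ)
    (h0 : (0 : ℝ) ∈ Set.Ioo a b)
    (h2R : 2 * R ∈ Set.Ioo a b)
    (hKexp : ∀ s ∈ Set.Ioo a b,
      ∫⁻ x in {x : ℝ | 1 ≤ |x|}, ENNReal.ofReal (Real.exp (s * x)) ∂K ≠ ⊤)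
    :
    ∃ c₁ : ℝ, 0 < c₁ ∧
      ∀ lam ∈ Set.Icc (0 : ℝ) 1, ∀ z : ℂ, z.re ∈ ({0, R, 2 * R} : Set ℝ) →
        ∀ n ∈ ({0, 1, 2} : Set ℕ),
          ‖iteratedDerivWithin n (fun l => kappa μ c K l z) (Set.Icc 0 1) lam‖ ≤
            c₁ * (1 + ‖z‖ ^ (3 + n)) := by
  have hK : Integrable (fun x => min 1 (x ^ 2)) K :=
    (lintegral_ofReal_ne_top_iff_integrable (by fun_prop) (.of_forall fun x => by positivity)).1
      hKmin
  have hexp : ∀ s ∈ Ioo a b, IntegrableOn (fun x => Real.exp (s * x)) {x | 1 ≤ |x|} K :=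
    fun s hs => (lintegral_ofReal_ne_top_iff_integrable (by fun_prop)
      (.of_forall fun x => (Real.exp_pos _).le)).1 (hKexp s hs)
  obtain ⟨q₁, q₂, hq₁, hq₂, hsub⟩ := exists_uIcc_subset_Ioo h0 h2R
  have hq : (0 : ℝ) ∈ Icc q₁ q₂ := Ioo_subset_Icc_self (hsub left_mem_uIcc)
  have henv := fun k (hk : 2 ≤ k) => integrable_abs_pow_mul_exp_add_exp hK hexp hq₁ hq₂ hk
  have hI : ∀ z : ℂ, z.re ∈ ({0, R, 2 * R} : Set ℝ) →
      ∀ l ∈ Icc (0 : ℝ) 1, l * z.re ∈ Ioo q₁ q₂ := fun z hz l hl =>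
    hsub ((convex_uIcc 0 (2 * R)).smul_mem_of_zero_mem left_mem_uIcc (mem_uIcc_zero_two_mul hz) hl)
  set B := expEnvelopeMoment K q₁ q₂
  have hB := expEnvelopeMoment_nonneg K q₁ q₂
  refine ⟨|μ| + |c| + B 2 + B 3 + B 4 + 1,
    by linarith [abs_nonneg μ, abs_nonneg c, hB 2, hB 3, hB 4], ?_⟩
  intro l hl z hz n hn
  have hz3 : 0 ≤ 1 + ‖z‖ ^ (3 + n) := by positivity
  rcases hn with rfl | rfl | rfl
  · refine (norm_kappa_le hq henv μ c (Ioo_subset_Icc_self (hI z hz l hl))).trans ?_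
    exact mul_le_mul_of_nonneg_right (by linarith [hB 3, hB 4]) hz3
  · refine (norm_iteratedDerivWithin_succ_kappa_le hq henv (hI z hz) μ c 0 hl).trans ?_
    exact mul_le_mul_of_nonneg_right (by linarith [abs_nonneg μ, abs_nonneg c, hB 2, hB 4]) hz3
  · refine (norm_iteratedDerivWithin_succ_kappa_le hq henv (hI z hz) μ c 1 hl).trans ?_
    exact mul_le_mul_of_nonneg_right (by linarith [abs_nonneg μ, abs_nonneg c, hB 2, hB 3]) hz3

/-- polynomial bound, uniform in `λ`, on `κ` and its first two partial
`λ`-derivatives (estimate in Proposition `kappa`). -/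
theorem kappa_lambda_derivatives_polynomial_bound
    (μ c : ℝ) (hc : 0 ≤ c) (K : MeasureTheory.Measure ℝ)
    (hK0 : K {0} = 0)
    (hKmin : ∫⁻ x : ℝ, ENNReal.ofReal (min 1 (x ^ 2)) ∂K ≠ ⊤)
    (R : ℝ) (hR : R ≠ 0) (a b : ℝ)
    (h0 : (0 : ℝ) ∈ Set.Ioo a b) (h2 : (2 : ℝ) ∈ Set.Ioo a b)
    (h2R : 2 * R ∈ Set.Ioo a b)
    (hK5 : ∫⁻ x in {x : ℝ | 1 ≤ |x|}, ENNReal.ofReal (|x| ^ 5) ∂K ≠ ⊤)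
    (hKexp : ∀ s ∈ Set.Ioo a b,
      ∫⁻ x in {x : ℝ | 1 ≤ |x|}, ENNReal.ofReal (Real.exp (s * x)) ∂K ≠ ⊤)
    (σ2 : ℝ) (hσ2 : σ2 = c + ∫ x : ℝ, x ^ 2 ∂K) (hσ2pos : 0 < σ2)
    :
    ∃ c₁ : ℝ, 0 < c₁ ∧
      ∀ lam ∈ Set.Icc (0 : ℝ) 1, ∀ z : ℂ, z.re ∈ ({0, R, 2 * R} : Set ℝ) →
        ∀ n ∈ ({0, 1, 2} : Set ℕ),
          ‖iteratedDerivWithin n (fun l => kappa μ c K l z) (Set.Icc 0 1) lam‖ ≤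
            c₁ * (1 + ‖z‖ ^ (3 + n)) :=
  kappa_lambda_derivatives_polynomial_bound_general μ c K hKmin R a b h0 h2R hKexp
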